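/- Fix a constant 0 < δ < 1. There exist N > 0 and 0 < α < 1, depending only on δ, such that for all integers k > N the following holds: let μ ≥ k+2 and let λ satisfy λ·f_k(λ) = μ·f_{k+1}(λ) with (1−δ)μ < λ ≤ μ and μ−λ small enough; if Y_1,…,Y_s are i.i.d. truncated Poisson variables with parameter λ conditioned to be ≥ k+1 (so E[Y_i] = μ), and s → ∞, then P(|Σ_{i=1}^s Y_i − μs| ≥ δμs) ≤ α^{μs}. -/

import Mathlib

/-!
Chernoff's bound. Conditioning on `Z ≥ m` multiplies the Poisson(`λ`) weights by `1 / f_m(λ)`, so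
exponential tilting bounds the moment generating function of a truncated Poisson variable by
`exp (λ (eᵗ - 1)) / f_m(λ)`. At `t = log r` the Chernoff bound for `∑ Yᵢ ≥ r μ s` (for `r ≥ 1`) or
`∑ Yᵢ ≤ r μ s` (for `r ≤ 1`) becomes `(exp (-μ klFun r + (λ - μ) (r - 1)) / f_m(λ)) ^ s`, where
`klFun r = r log r + 1 - r > 0` for `r ≠ 1`. The cross term is at most `1` because `|λ - μ| ≤ 1`,
and `f_m(λ) ≥ e⁻⁴` once `m ≤ λ` and `λ ≥ 100`: by Stirling each Poisson weight on the window
`[⌈λ⌉, ⌈λ⌉ + ⌈√λ⌉]` is at least `e⁻³ / (2√λ)`. So with `c = min (klFun (1 + δ)) (klFun (1 - δ))`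
both tails are at most `exp (-c μ / 2) ^ s` as soon as `c μ ≥ 10`.
-/

open MeasureTheory ProbabilityTheory

/-- The upper tail of a Poisson(x) distribution: `f_k(x) = ∑_{i ≥ k} e^{-x} x^i / i!`. -/
noncomputable def fpois (k : ℕ) (x : ℝ) : ℝ :=
  ∑' i : ℕ, if k ≤ i then Real.exp (-x) * x ^ i / (Nat.factorial i) else 0

open Real InformationTheory
open scoped Nat

noncomputable def poissonTerm (x : ℝ) (n : ℕ) : ℝ := exp (-x) * x ^ n / n !

lemma hasSum_poissonTerm (x : ℝ) : HasSum (poissonTerm x) 1 := by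
  have h := (NormedSpace.expSeries_div_hasSum_exp x).mul_left (exp (-x))
  rw [← exp_eq_exp_ℝ, ← exp_add, neg_add_cancel, exp_zero] at h
  simp only [← mul_div_assoc] at h
  exact h

lemma poissonTerm_pos {x : ℝ} (hx : 0 < x) (n : ℕ) : 0 < poissonTerm x n := by
  unfold poissonTerm
  positivity

lemma poissonTerm_nonneg {x : ℝ} (hx : 0 ≤ x) (n : ℕ) : 0 ≤ poissonTerm x n := by
  unfold poissonTerm
  positivity

lemma poissonTerm_succ (x : ℝ) (n : ℕ) :
    poissonTerm x (n + 1) = poissonTerm x n * (x / (n + 1)) := by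
  simp only [poissonTerm, pow_succ, Nat.factorial_succ]
  push_cast
  field_simp

lemma poissonTerm_le_of_le {x : ℝ} (hx : 0 ≤ x) {j n : ℕ} (hxj : x ≤ j) (hjn : j ≤ n) :
    poissonTerm x n ≤ poissonTerm x j := by
  induction n, hjn using Nat.le_induction with
  | base => rfl
  | succ n hjn ih =>
    have hratio : x / (n + 1) ≤ 1 :=
      div_le_one_of_le₀ (by linarith [(Nat.cast_le (α := ℝ)).mpr hjn]) (by positivity)
    rw [poissonTerm_succ]
    exact (mul_le_of_le_one_right (poissonTerm_nonneg hx n) hratio).trans ih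

lemma sum_le_fpois {x : ℝ} (hx : 0 ≤ x) {m : ℕ} {s : Finset ℕ} (hs : ∀ j ∈ s, m ≤ j) :
    ∑ j ∈ s, poissonTerm x j ≤ fpois m x := by
  have hle (j : ℕ) : (if m ≤ j then poissonTerm x j else 0) ≤ poissonTerm x j := by
    split_ifs
    exacts [le_rfl, poissonTerm_nonneg hx j]
  have hnonneg (j : ℕ) : 0 ≤ if m ≤ j then poissonTerm x j else 0 := by
    split_ifs
    exacts [poissonTerm_nonneg hx j, le_rfl]
  calc ∑ j ∈ s, poissonTerm x j = ∑ j ∈ s, if m ≤ j then poissonTerm x j else 0 :=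
        Finset.sum_congr rfl fun j hj => (if_pos (hs j hj)).symm
    _ ≤ fpois m x := Summable.sum_le_tsum s (fun j _ => hnonneg j)
        ((hasSum_poissonTerm x).summable.of_nonneg_of_le hnonneg hle)

lemma fpois_pos {x : ℝ} (hx : 0 < x) (m : ℕ) : 0 < fpois m x :=
  (poissonTerm_pos hx m).trans_le (by simpa using sum_le_fpois hx.le (s := {m}) (by simp))

lemma factorial_le_exp_one_mul_sqrt_mul {n : ℕ} (hn : n ≠ 0) :
    (n ! : ℝ) ≤ exp 1 * √n * (n / exp 1) ^ n := by
  obtain ⟨n, rfl⟩ := Nat.exists_eq_succ_of_ne_zero hn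
  have h := Stirling.stirlingSeq'_antitone (Nat.zero_le n)
  simp only [Function.comp_apply, Stirling.stirlingSeq_one] at h
  rw [Stirling.stirlingSeq] at h
  rw [div_le_iff₀ (by positivity)] at h
  refine h.trans_eq ?_
  rw [sqrt_mul zero_le_two]
  field_simp

lemma exp_neg_three_div_sqrt_le_poissonTerm {x : ℝ} (hx : 0 < x) {n : ℕ} (hxn : x ≤ n)
    (hn : ((n : ℝ) - x) ^ 2 ≤ 2 * x) : exp (-3) / √n ≤ poissonTerm x n := by
  have hn0 : (0 : ℝ) < n := hx.trans_le hxn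
  have hexponent : -2 ≤ n - x + n * log (x / n) := by
    have hlog : log (n / x) ≤ n / x - 1 := log_le_sub_one_of_pos (by positivity)
    have hsq : (n : ℝ) * (n / x - 1) = n - x + (n - x) ^ 2 / x := by field_simp; ring
    have : ((n : ℝ) - x) ^ 2 / x ≤ 2 := by rw [div_le_iff₀ hx]; linarith
    rw [← inv_div, log_inv]
    nlinarith [mul_le_mul_of_nonneg_left hlog hn0.le]
  have hpow : (x / n) ^ n = exp (n * log (x / n)) := by
    rw [← log_pow, exp_log (by positivity)]
  calc exp (-3) / √n ≤ exp (n - x + n * log (x / n) - 1) / √n := by gcongr; linarith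
    _ = exp (-x) * x ^ n / (exp 1 * √n * (n / exp 1) ^ n) := by
        rw [exp_sub, exp_add, ← hpow, exp_sub, div_pow, div_pow, ← exp_nat_mul, exp_neg]
        field_simp
    _ ≤ poissonTerm x n := by
        unfold poissonTerm
        gcongr
        exact factorial_le_exp_one_mul_sqrt_mul (by exact_mod_cast hn0.ne')

lemma succ_mul_poissonTerm_le_fpois {x : ℝ} (hx : 0 ≤ x) {m n₀ : ℕ} (hm : m ≤ n₀)
    (hxn₀ : x ≤ n₀) (w : ℕ) : ((w : ℝ) + 1) * poissonTerm x (n₀ + w) ≤ fpois m x := by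
  have hdom : ∀ j ∈ Finset.Icc n₀ (n₀ + w), poissonTerm x (n₀ + w) ≤ poissonTerm x j :=
    fun j hj => poissonTerm_le_of_le hx (hxn₀.trans (Nat.cast_le.mpr (Finset.mem_Icc.mp hj).1))
      (Finset.mem_Icc.mp hj).2
  have hcard : (Finset.Icc n₀ (n₀ + w)).card = w + 1 := by rw [Nat.card_Icc]; omega
  calc ((w : ℝ) + 1) * poissonTerm x (n₀ + w)
      ≤ ∑ j ∈ Finset.Icc n₀ (n₀ + w), poissonTerm x j := by
        simpa only [hcard, nsmul_eq_mul, Nat.cast_add_one] using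
          Finset.card_nsmul_le_sum _ _ _ hdom
    _ ≤ fpois m x := sum_le_fpois hx fun j hj => hm.trans (Finset.mem_Icc.mp hj).1

lemma exp_neg_four_le_fpois {x : ℝ} (hx : 100 ≤ x) {m : ℕ} (hm : (m : ℝ) ≤ x) :
    exp (-4) ≤ fpois m x := by
  have hx0 : 0 < x := by linarith
  set n₀ := ⌈x⌉₊
  set w := ⌈√x⌉₊
  have hsqrt : 10 ≤ √x := le_sqrt_of_sq_le (by linarith)
  have hsqrt_sq : √x * √x = x := mul_self_sqrt hx0.le
  have hxn₀ : x ≤ n₀ := Nat.le_ceil x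
  have hn₀x : (n₀ : ℝ) < x + 1 := Nat.ceil_lt_add_one hx0.le
  have hw : √x ≤ w := Nat.le_ceil _
  have hw' : (w : ℝ) < √x + 1 := Nat.ceil_lt_add_one (sqrt_nonneg x)
  have hn : ((n₀ + w : ℕ) : ℝ) = n₀ + w := Nat.cast_add _ _
  have hterm : exp (-3) / √(n₀ + w : ℕ) ≤ poissonTerm x (n₀ + w) :=
    exp_neg_three_div_sqrt_le_poissonTerm hx0 (by rw [hn]; linarith [Nat.cast_nonneg (α := ℝ) w])
      (by rw [hn]; nlinarith)
  have hsqrt_n : √(n₀ + w : ℕ) ≤ 2 * √x :=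
    (sqrt_le_left (by positivity)).mpr (by rw [hn, mul_pow, sq_sqrt hx0.le]; nlinarith)
  have hsqrt_n_pos : 0 < √(n₀ + w : ℕ) := sqrt_pos.mpr (by rw [hn]; linarith)
  have htwo : exp (-4) * 2 ≤ exp (-3) := by
    rw [show (-3 : ℝ) = -4 + 1 by norm_num, exp_add]
    gcongr
    linarith [add_one_le_exp (1 : ℝ)]
  calc exp (-4) ≤ exp (-3) / (2 * √x) * (w + 1) := by
        rw [div_mul_eq_mul_div, le_div_iff₀ (by positivity), ← mul_assoc]
        exact mul_le_mul htwo (by linarith) (sqrt_nonneg _) (exp_pos _).le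
    _ ≤ exp (-3) / √(n₀ + w : ℕ) * (w + 1) := by gcongr
    _ ≤ poissonTerm x (n₀ + w) * (w + 1) := by gcongr
    _ = (w + 1) * poissonTerm x (n₀ + w) := mul_comm _ _
    _ ≤ fpois m x := succ_mul_poissonTerm_le_fpois hx0.le (Nat.cast_le.mp (hm.trans hxn₀)) hxn₀ w

-- Written in the shape of the hypothesis of `stmt6`, which is then `truncPoisson (k + 1) lam j`
-- by definition.
noncomputable def truncPoisson (m : ℕ) (x : ℝ) (j : ℕ) : ℝ :=
  if m ≤ j then exp (-x) * x ^ j / (j ! * fpois m x) else 0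

lemma truncPoisson_nonneg {x : ℝ} (hx : 0 < x) (m j : ℕ) : 0 ≤ truncPoisson m x j := by
  have := fpois_pos hx m
  unfold truncPoisson
  split_ifs <;> positivity

lemma truncPoisson_mul_exp_le {x : ℝ} (hx : 0 < x) (m : ℕ) (t : ℝ) (j : ℕ) :
    truncPoisson m x j * exp (t * j) ≤
      exp (x * (exp t - 1)) / fpois m x * poissonTerm (x * exp t) j := by
  have hF := fpois_pos hx m
  unfold truncPoisson
  split_ifs
  · apply le_of_eq
    rw [poissonTerm, mul_pow, ← exp_nat_mul, mul_comm (j : ℝ) t]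
    field_simp
    rw [← exp_add]
    ring_nf
  · rw [zero_mul]
    have := poissonTerm_nonneg (x := x * exp t) (by positivity) j
    positivity

lemma summable_truncPoisson_mul_exp {x : ℝ} (hx : 0 < x) (m : ℕ) (t : ℝ) :
    Summable fun j : ℕ => truncPoisson m x j * exp (t * j) :=
  ((hasSum_poissonTerm (x * exp t)).summable.mul_left _).of_nonneg_of_le
    (fun j => mul_nonneg (truncPoisson_nonneg hx m j) (exp_pos _).le)
    (truncPoisson_mul_exp_le hx m t)

lemma tsum_truncPoisson_mul_exp_le {x : ℝ} (hx : 0 < x) (m : ℕ) (t : ℝ) :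
    ∑' j : ℕ, truncPoisson m x j * exp (t * j) ≤ exp (x * (exp t - 1)) / fpois m x := by
  have hsum := (hasSum_poissonTerm (x * exp t)).mul_left (exp (x * (exp t - 1)) / fpois m x)
  rw [mul_one] at hsum
  exact hsum.tsum_eq ▸ (summable_truncPoisson_mul_exp hx m t).tsum_le_tsum
    (truncPoisson_mul_exp_le hx m t) hsum.summable

section NatValued

variable {Ω : Type*} [MeasurableSpace Ω] {P : Measure Ω} {Y : Ω → ℕ} {t : ℝ}

lemma integrable_exp_mul_natCast [IsFiniteMeasure P] (hY : Measurable Y)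
    (hsum : Summable fun j : ℕ => P.real {ω | Y ω = j} * exp (t * j)) :
    Integrable (fun ω => exp (t * Y ω)) P := by
  have hmap : Integrable (fun j : ℕ => exp (t * j)) (P.map Y) := by
    rw [← Measure.sum_smul_dirac (P.map Y), integrable_sum_dirac_iff (fun _ => measure_ne_top _ _)]
    refine hsum.congr fun j => ?_
    rw [Real.norm_of_nonneg (exp_pos _).le, ← measureReal_def,
      map_measureReal_apply hY (measurableSet_singleton j)]
    rfl
  exact (integrable_map_measure (by fun_prop) hY.aemeasurable).mp hmap

lemma mgf_natCast_eq_tsum (hY : Measurable Y) (hint : Integrable (fun ω => exp (t * Y ω)) P) :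
    mgf (fun ω => (Y ω : ℝ)) P t = ∑' j : ℕ, P.real {ω | Y ω = j} * exp (t * j) := by
  have hmap : Integrable (fun j : ℕ => exp (t * j)) (P.map Y) :=
    (integrable_map_measure (by fun_prop) hY.aemeasurable).mpr hint
  rw [mgf, ← integral_map (f := fun j : ℕ => exp (t * j)) hY.aemeasurable (by fun_prop),
    integral_countable hmap]
  refine tsum_congr fun j => ?_
  rw [map_measureReal_apply hY (measurableSet_singleton j), smul_eq_mul]
  rfl

end NatValued

namespace ProbabilityTheory

variable {Ω ι : Type*} [MeasurableSpace Ω] {P : Measure Ω} [Fintype ι]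
  {X : ι → Ω → ℝ} {t M : ℝ}

lemma iIndepFun.exp_mul_mgf_sum_le (hindep : iIndepFun X P) (hmeas : ∀ i, Measurable (X i))
    (hmgf : ∀ i, mgf (X i) P t ≤ M) (a : ℝ) :
    exp (-t * (a * Fintype.card ι)) * mgf (∑ i, X i) P t ≤ (exp (-t * a) * M) ^ Fintype.card ι := by
  calc exp (-t * (a * Fintype.card ι)) * mgf (∑ i, X i) P t
      = exp (-t * a) ^ Fintype.card ι * ∏ i, mgf (X i) P t := by
        rw [hindep.mgf_sum hmeas, ← exp_nat_mul]
        ring_nf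
    _ ≤ exp (-t * a) ^ Fintype.card ι * ∏ _i : ι, M := by
        gcongr with i
        · exact fun i _ => mgf_nonneg
        · exact hmgf i
    _ = (exp (-t * a) * M) ^ Fintype.card ι := by
        rw [Finset.prod_const, Finset.card_univ, mul_pow]

lemma iIndepFun.measureReal_sum_ge_le (hindep : iIndepFun X P) (hmeas : ∀ i, Measurable (X i))
    (ht : 0 ≤ t) (hint : ∀ i, Integrable (fun ω => exp (t * X i ω)) P)
    (hmgf : ∀ i, mgf (X i) P t ≤ M) (a : ℝ) :
    P.real {ω | a * Fintype.card ι ≤ ∑ i, X i ω} ≤ (exp (-t * a) * M) ^ Fintype.card ι := by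
  have := hindep.isProbabilityMeasure
  have := measure_ge_le_exp_mul_mgf (a * Fintype.card ι) ht
    (hindep.integrable_exp_mul_sum hmeas (s := Finset.univ) fun i _ => hint i)
  simp only [Finset.sum_apply] at this
  exact this.trans (hindep.exp_mul_mgf_sum_le hmeas hmgf a)

lemma iIndepFun.measureReal_sum_le_le (hindep : iIndepFun X P) (hmeas : ∀ i, Measurable (X i))
    (ht : t ≤ 0) (hint : ∀ i, Integrable (fun ω => exp (t * X i ω)) P)
    (hmgf : ∀ i, mgf (X i) P t ≤ M) (a : ℝ) :
    P.real {ω | ∑ i, X i ω ≤ a * Fintype.card ι} ≤ (exp (-t * a) * M) ^ Fintype.card ι := by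
  have := hindep.isProbabilityMeasure
  have := measure_le_le_exp_mul_mgf (a * Fintype.card ι) ht
    (hindep.integrable_exp_mul_sum hmeas (s := Finset.univ) fun i _ => hint i)
  simp only [Finset.sum_apply] at this
  exact this.trans (hindep.exp_mul_mgf_sum_le hmeas hmgf a)

end ProbabilityTheory

section TruncPoissonSum

variable {Ω : Type*} [MeasurableSpace Ω] {P : Measure Ω} {m : ℕ} {x : ℝ}

lemma integrable_exp_mul_of_truncPoisson [IsFiniteMeasure P] {Y : Ω → ℕ} (hY : Measurable Y)
    (hx : 0 < x) (hpmf : ∀ j, P.real {ω | Y ω = j} = truncPoisson m x j) (t : ℝ) :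
    Integrable (fun ω => exp (t * Y ω)) P :=
  integrable_exp_mul_natCast hY (by simpa only [hpmf] using summable_truncPoisson_mul_exp hx m t)

lemma mgf_le_of_truncPoisson [IsFiniteMeasure P] {Y : Ω → ℕ} (hY : Measurable Y) (hx : 0 < x)
    (hpmf : ∀ j, P.real {ω | Y ω = j} = truncPoisson m x j) (t : ℝ) :
    mgf (fun ω => (Y ω : ℝ)) P t ≤ exp (x * (exp t - 1)) / fpois m x := by
  rw [mgf_natCast_eq_tsum hY (integrable_exp_mul_of_truncPoisson hY hx hpmf t)]
  simpa only [hpmf] using tsum_truncPoisson_mul_exp_le hx m t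

lemma exp_neg_log_mul_mul_exp_div_eq {r : ℝ} (hr : 0 < r) (x μ F : ℝ) :
    exp (-log r * (r * μ)) * (exp (x * (exp (log r) - 1)) / F) =
      exp (-μ * klFun r + (x - μ) * (r - 1)) / F := by
  rw [exp_log hr, klFun_apply, mul_div_assoc', ← exp_add]
  ring_nf

variable {s : ℕ} {Y : Fin s → Ω → ℕ}

lemma measureReal_truncPoisson_sum_ge_le (hmeas : ∀ i, Measurable (Y i)) (hindep : iIndepFun Y P)
    (hx : 0 < x) (hpmf : ∀ i j, P.real {ω | Y i ω = j} = truncPoisson m x j) {r : ℝ} (hr : 1 ≤ r)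
    (μ : ℝ) :
    P.real {ω | r * μ * s ≤ ∑ i, (Y i ω : ℝ)} ≤
      (exp (-μ * klFun r + (x - μ) * (r - 1)) / fpois m x) ^ s := by
  have := hindep.isProbabilityMeasure
  have hX : iIndepFun (fun i ω => (Y i ω : ℝ)) P :=
    hindep.comp (fun _ (n : ℕ) => (n : ℝ)) fun _ => measurable_from_top
  have h := hX.measureReal_sum_ge_le (fun i => by fun_prop) (log_nonneg hr)
    (fun i => integrable_exp_mul_of_truncPoisson (hmeas i) hx (hpmf i) _)
    (fun i => mgf_le_of_truncPoisson (hmeas i) hx (hpmf i) _) (r * μ)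
  rwa [Fintype.card_fin, exp_neg_log_mul_mul_exp_div_eq (by linarith)] at h

lemma measureReal_truncPoisson_sum_le_le (hmeas : ∀ i, Measurable (Y i)) (hindep : iIndepFun Y P)
    (hx : 0 < x) (hpmf : ∀ i j, P.real {ω | Y i ω = j} = truncPoisson m x j) {r : ℝ} (hr₀ : 0 < r)
    (hr : r ≤ 1) (μ : ℝ) :
    P.real {ω | ∑ i, (Y i ω : ℝ) ≤ r * μ * s} ≤
      (exp (-μ * klFun r + (x - μ) * (r - 1)) / fpois m x) ^ s := by
  have := hindep.isProbabilityMeasure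
  have hX : iIndepFun (fun i ω => (Y i ω : ℝ)) P :=
    hindep.comp (fun _ (n : ℕ) => (n : ℝ)) fun _ => measurable_from_top
  have h := hX.measureReal_sum_le_le (fun i => by fun_prop) (log_nonpos hr₀.le hr)
    (fun i => integrable_exp_mul_of_truncPoisson (hmeas i) hx (hpmf i) _)
    (fun i => mgf_le_of_truncPoisson (hmeas i) hx (hpmf i) _) (r * μ)
  rwa [Fintype.card_fin, exp_neg_log_mul_mul_exp_div_eq hr₀] at h

end TruncPoissonSum

lemma klFun_pos {x : ℝ} (hx : 0 ≤ x) (hx1 : x ≠ 1) : 0 < klFun x :=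
  (klFun_nonneg hx).lt_of_ne fun h => hx1 ((klFun_eq_zero_iff hx).mp h.symm)

lemma exp_div_le_exp_neg_half_mul {F c μ x r : ℝ} (hF : exp (-4) ≤ F) (hc : c ≤ klFun r)
    (hμ : 0 ≤ μ) (hcμ : 10 ≤ c * μ) (hxμ : |x - μ| ≤ 1) (hr : |r - 1| ≤ 1) :
    exp (-μ * klFun r + (x - μ) * (r - 1)) / F ≤ exp (-(c / 2) * μ) := by
  have hcross : (x - μ) * (r - 1) ≤ 1 := by
    refine (le_abs_self _).trans ?_
    rw [abs_mul]
    nlinarith [abs_nonneg (x - μ), abs_nonneg (r - 1)]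
  calc exp (-μ * klFun r + (x - μ) * (r - 1)) / F
      ≤ exp (-μ * klFun r + (x - μ) * (r - 1)) / exp (-4) := by gcongr
    _ = exp (-μ * klFun r + (x - μ) * (r - 1) + 4) := by rw [← exp_sub]; ring_nf
    _ ≤ exp (-(c / 2) * μ) := exp_le_exp.mpr (by nlinarith [mul_le_mul_of_nonneg_left hc hμ])

lemma measureReal_truncPoisson_sum_deviation_le {Ω : Type*} [MeasurableSpace Ω] {P : Measure Ω}
    {s m : ℕ} {x μ δ c : ℝ} {Y : Fin s → Ω → ℕ} (hmeas : ∀ i, Measurable (Y i))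
    (hindep : iIndepFun Y P) (hpmf : ∀ i j, P.real {ω | Y i ω = j} = truncPoisson m x j)
    (hx : 100 ≤ x) (hm : (m : ℝ) ≤ x) (hxμ : |x - μ| ≤ 1) (hδ0 : 0 < δ) (hδ1 : δ < 1)
    (hc₁ : c ≤ klFun (1 + δ)) (hc₂ : c ≤ klFun (1 - δ)) (hμ : 0 ≤ μ) (hcμ : 10 ≤ c * μ) :
    P.real {ω | δ * μ * s ≤ |(∑ i, (Y i ω : ℝ)) - μ * s|} ≤ 2 * exp (-(c / 2) * μ) ^ s := by
  have := hindep.isProbabilityMeasure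
  have hx0 : 0 < x := by linarith
  have hF := exp_neg_four_le_fpois hx hm
  have hfactor {r : ℝ} (hcr : c ≤ klFun r) (hr : |r - 1| ≤ 1) :
      (exp (-μ * klFun r + (x - μ) * (r - 1)) / fpois m x) ^ s ≤ exp (-(c / 2) * μ) ^ s :=
    pow_le_pow_left₀ (div_nonneg (exp_pos _).le ((exp_pos _).trans_le hF).le)
      (exp_div_le_exp_neg_half_mul hF hcr hμ hcμ hxμ hr) s
  have hupper := (measureReal_truncPoisson_sum_ge_le hmeas hindep hx0 hpmf
    (le_add_of_nonneg_right hδ0.le) μ).trans (hfactor hc₁ (abs_le.mpr ⟨by linarith, by linarith⟩))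
  have hlower := (measureReal_truncPoisson_sum_le_le hmeas hindep hx0 hpmf (by linarith)
    (by linarith) μ).trans (hfactor hc₂ (abs_le.mpr ⟨by linarith, by linarith⟩))
  calc P.real {ω | δ * μ * s ≤ |(∑ i, (Y i ω : ℝ)) - μ * s|}
      ≤ P.real {ω | (1 + δ) * μ * s ≤ ∑ i, (Y i ω : ℝ)} +
          P.real {ω | ∑ i, (Y i ω : ℝ) ≤ (1 - δ) * μ * s} := by
        refine (measureReal_mono fun ω hω => ?_).trans (measureReal_union_le _ _)
        rcases le_abs'.mp hω.out with h | h
        · exact Or.inr (Set.mem_ofPred.mpr (by linarith))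
        · exact Or.inl (Set.mem_ofPred.mpr (by linarith))
    _ ≤ 2 * exp (-(c / 2) * μ) ^ s := by linarith

lemma two_mul_exp_pow_le_rpow {c μ : ℝ} (hcμ : 10 ≤ c * μ) {s : ℕ} (hs : 1 ≤ s) :
    2 * exp (-(c / 2) * μ) ^ s ≤ exp (-(c / 4)) ^ (μ * s) := by
  have hs' : (1 : ℝ) ≤ s := by exact_mod_cast hs
  calc 2 * exp (-(c / 2) * μ) ^ s ≤ exp 1 * exp (-(c / 2) * μ * s) := by
        rw [← exp_nat_mul, mul_comm (s : ℝ)]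
        gcongr
        linarith [add_one_le_exp (1 : ℝ)]
    _ = exp (1 - c / 2 * μ * s) := by rw [← exp_add]; ring_nf
    _ ≤ exp (-(c / 4) * (μ * s)) := exp_le_exp.mpr (by nlinarith)
    _ = exp (-(c / 4)) ^ (μ * s) := exp_mul _ _

/-- Fix `0 < δ < 1`. There exist `N > 0` and `0 < α < 1` (depending only on `δ`),
together with a closeness parameter `η > 0` and a size threshold `S₀`, such that for all
`k > N`: if `μ ≥ k + 2`, `λ` satisfies `λ f_k(λ) = μ f_{k+1}(λ)` with `(1−δ)μ < λ ≤ μ`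
and `μ − λ < η`, and `Y_1, …, Y_s` (with `s ≥ S₀`) are i.i.d. Poisson(λ) variables
truncated to be `≥ k+1` (so each has mean `μ`), then
`P(|∑ Y_i − μ s| ≥ δ μ s) ≤ α^{μ s}`. -/
theorem stmt6 (δ : ℝ) (hδ0 : 0 < δ) (hδ1 : δ < 1) :
    ∃ N : ℕ, 0 < N ∧ ∃ α : ℝ, 0 < α ∧ α < 1 ∧ ∃ η : ℝ, 0 < η ∧ ∃ S₀ : ℕ,
      ∀ k : ℕ, N < k → ∀ μ lam : ℝ, (k : ℝ) + 2 ≤ μ →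
        lam * fpois k lam = μ * fpois (k + 1) lam →
        (1 - δ) * μ < lam → lam ≤ μ → μ - lam < η →
        ∀ s : ℕ, S₀ ≤ s →
          ∀ (Ω : Type) (_ : MeasureSpace Ω) (_ : IsProbabilityMeasure (ℙ : Measure Ω))
            (Y : Fin s → Ω → ℕ),
            (∀ i, Measurable (Y i)) →
            iIndepFun Y ℙ →
            (∀ i j, (ℙ {ω | Y i ω = j}).toReal =
              if k + 1 ≤ j then
                Real.exp (-lam) * lam ^ j / (Nat.factorial j * fpois (k + 1) lam)
              else 0) →
            (ℙ {ω | δ * μ * s ≤ |(∑ i, (Y i ω : ℝ)) - μ * s|}).toReal ≤ α ^ (μ * s) := by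
  set c := min (klFun (1 + δ)) (klFun (1 - δ))
  have hc : 0 < c := lt_min (klFun_pos (by linarith) (by linarith))
    (klFun_pos (by linarith) (by linarith))
  have h10c : 0 < 10 / c := by positivity
  refine ⟨100 + ⌈10 / c⌉₊, by positivity, exp (-(c / 4)), exp_pos _,
    exp_lt_one_iff.mpr (by linarith), 1, one_pos, 1, ?_⟩
  intro k hk μ lam hμ _ _ hlam_le hclose s hs Ω _ _ Y hmeas hindep hpmf
  have hk' : 100 + 10 / c ≤ (k : ℝ) := by
    have := (Nat.cast_le (α := ℝ)).mpr hk.le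
    push_cast at this
    linarith [Nat.le_ceil (10 / c)]
  have hcμ : 10 ≤ c * μ := by
    rw [← div_le_iff₀' hc]
    linarith
  set P : Measure Ω := ℙ
  calc P.real {ω | δ * μ * s ≤ |(∑ i, (Y i ω : ℝ)) - μ * s|}
      ≤ 2 * exp (-(c / 2) * μ) ^ s :=
        measureReal_truncPoisson_sum_deviation_le hmeas hindep hpmf (by linarith)
          (by push_cast; linarith) (abs_le.mpr ⟨by linarith, by linarith⟩) hδ0 hδ1
          (min_le_left _ _) (min_le_right _ _) (by linarith) hcμ
    _ ≤ exp (-(c / 4)) ^ (μ * s) := two_mul_exp_pow_le_rpow hcμ hs
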